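/- (Proposition 1, edges sharing one node, SNPs in different SNP-sets) Let v1, v2, v3 be pairwise distinct nodes and p ≠ p' be distinct SNPs with q(p) ≠ q(p'), and assume σ_f² + 2σ_g² + 2σ_h² > 0. Then Cor(L(v1,v3,p), L(v2,v3,p')) = σ_g²/(σ_f² + 2σ_g² + 2σ_h²). -/

import Mathlib

open MeasureTheory ProbabilityTheory

/-- Covariance of two real random variables: `Cov(X,Y) = E[(X - E X)(Y - E Y)]`. -/
noncomputable def cov {Ω : Type*} [MeasurableSpace Ω] (μ : Measure Ω) (X Y : Ω → ℝ) : ℝ :=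
  ∫ ω, (X ω - ∫ x, X x ∂μ) * (Y ω - ∫ x, Y x ∂μ) ∂μ

/-- Pearson correlation: `Cor(X,Y) = Cov(X,Y) / (Var(X)^{1/2} Var(Y)^{1/2})`. -/
noncomputable def cor {Ω : Type*} [MeasurableSpace Ω] (μ : Measure Ω) (X Y : Ω → ℝ) : ℝ :=
  cov μ X Y / (Real.sqrt (variance X μ) * Real.sqrt (variance Y μ))

/-! Each `L v v' p` is the sum of five members of the independent family
`Sum.elim F (Sum.elim G H)`, and for two such sums the covariance is the sum of the variances of
the shared members. The edges `(v₁, v₃)` at SNP `p` and `(v₂, v₃)` at SNP `p'` share only `G v₃`,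
so the covariance is `σ_g²`, while each variance is `σ_f² + 2σ_g² + 2σ_h²`. -/

lemma cov_eq_covariance {Ω : Type*} [MeasurableSpace Ω] (μ : Measure Ω) (X Y : Ω → ℝ) :
    cov μ X Y = cov[X, Y; μ] :=
  rfl

lemma cor_eq_cov_div_of_variance_eq {Ω : Type*} [MeasurableSpace Ω] {μ : Measure Ω}
    {X Y : Ω → ℝ} {s : ℝ} (hX : variance X μ = s) (hY : variance Y μ = s) :
    cor μ X Y = cov μ X Y / s := by
  rw [cor, hX, hY, Real.mul_self_sqrt (hX ▸ variance_nonneg X μ)]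

namespace ProbabilityTheory

variable {Ω ι : Type*} [MeasurableSpace Ω] {μ : Measure Ω} {T : ι → Ω → ℝ}

lemma iIndepFun.covariance_sum_sum [IsFiniteMeasure μ] [DecidableEq ι] (hT : iIndepFun T μ)
    (hmem : ∀ i, MemLp (T i) 2 μ) (s t : Finset ι) :
    cov[∑ i ∈ s, T i, ∑ j ∈ t, T j; μ] = ∑ i ∈ s ∩ t, Var[T i; μ] := by
  have hpair : ∀ i j, cov[T i, T j; μ] = if i = j then Var[T i; μ] else 0 := by
    intro i j
    split_ifs with hij
    · rw [hij, covariance_self (hmem j).aemeasurable]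
    · exact (hT.indepFun hij).covariance_eq_zero (hmem i) (hmem j)
  rw [covariance_sum_sum' (fun i _ => hmem i) (fun j _ => hmem j), ← Finset.sum_ite_mem]
  simp_rw [hpair, Finset.sum_ite_eq]

lemma iIndepFun.variance_sum (hT : iIndepFun T μ) (hmem : ∀ i, MemLp (T i) 2 μ)
    (s : Finset ι) :
    Var[∑ i ∈ s, T i; μ] = ∑ i ∈ s, Var[T i; μ] :=
  IndepFun.variance_sum (fun i _ => hmem i) fun _ _ _ _ hij => hT.indepFun hij

end ProbabilityTheory

section EdgeTerms

variable {Q V P : Type*} [DecidableEq Q] [DecidableEq V] [DecidableEq P]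

/-- The indices in `Sum.elim F (Sum.elim G H)` of the five summands of `L v v' p`. -/
def edgeTerms (q : P → Q) (v v' : V) (p : P) : Finset (Q ⊕ (V ⊕ V × P)) :=
  {.inl (q p), .inr (.inl v), .inr (.inl v'), .inr (.inr (v, p)), .inr (.inr (v', p))}

lemma sum_edgeTerms {M : Type*} [AddCommMonoid M] (f : Q → M) (g : V → M) (h : V × P → M)
    (q : P → Q) {v v' : V} (hv : v ≠ v') (p : P) :
    ∑ i ∈ edgeTerms q v v' p, Sum.elim f (Sum.elim g h) i
      = f (q p) + g v + g v' + h (v, p) + h (v', p) := by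
  simp [edgeTerms, Finset.sum_insert, hv, add_assoc]

lemma edgeTerms_inter_of_shared_node (q : P → Q) {v₁ v₂ : V} (h₁₂ : v₁ ≠ v₂) (v₃ : V)
    {p p' : P} (hq : q p ≠ q p') :
    edgeTerms q v₁ v₃ p ∩ edgeTerms q v₂ v₃ p' = {.inr (.inl v₃)} := by
  have hp : p ≠ p' := ne_of_apply_ne q hq
  ext (i | i | ⟨v, r⟩) <;>
    simp only [edgeTerms, Finset.mem_inter, Finset.mem_insert, Finset.mem_singleton] <;> grind

end EdgeTerms

theorem nrss_cor_shared_node_diff_set_general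
    {Ω Q V P : Type*} [MeasurableSpace Ω]
    (μ : Measure Ω) [IsProbabilityMeasure μ]
    (q : P → Q)
    (F : Q → Ω → ℝ) (G : V → Ω → ℝ) (H : V × P → Ω → ℝ)
    (σf2 σg2 σh2 : ℝ)
    (hIndep : iIndepFun (m := fun _ : Q ⊕ (V ⊕ V × P) => (inferInstance : MeasurableSpace ℝ))
      (Sum.elim F (Sum.elim G H)) μ)
    (hFmem : ∀ i, MemLp (F i) 2 μ)
    (hGmem : ∀ i, MemLp (G i) 2 μ)
    (hHmem : ∀ i, MemLp (H i) 2 μ)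
    (hFvar : ∀ i, variance (F i) μ = σf2)
    (hGvar : ∀ i, variance (G i) μ = σg2)
    (hHvar : ∀ i, variance (H i) μ = σh2)
    (L : V → V → P → Ω → ℝ)
    (hL : ∀ v v' p ω, L v v' p ω = F (q p) ω + G v ω + G v' ω + H (v, p) ω + H (v', p) ω)
    (v1 v2 v3 : V) (h12 : v1 ≠ v2) (h13 : v1 ≠ v3) (h23 : v2 ≠ v3)
    (p p' : P) (hq : q p ≠ q p') :
    cor μ (L v1 v3 p) (L v2 v3 p') = σg2 / (σf2 + 2 * σg2 + 2 * σh2) := by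
  classical
  set T := Sum.elim F (Sum.elim G H)
  have hTmem : ∀ i, MemLp (T i) 2 μ := by
    rintro (i | i | i)
    exacts [hFmem i, hGmem i, hHmem i]
  have hTvar : ∀ i,
      Var[T i; μ] = Sum.elim (fun _ => σf2) (Sum.elim (fun _ => σg2) fun _ => σh2) i := by
    rintro (i | i | i)
    exacts [hFvar i, hGvar i, hHvar i]
  have hLsum : ∀ v v' r, v ≠ v' → L v v' r = ∑ i ∈ edgeTerms q v v' r, T i := by
    intro v v' r hv
    rw [sum_edgeTerms F G H q hv]
    ext ω
    simp only [hL, Pi.add_apply]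
  have hLvar : ∀ v v' r, v ≠ v' → Var[L v v' r; μ] = σf2 + 2 * σg2 + 2 * σh2 := by
    intro v v' r hv
    rw [hLsum v v' r hv, hIndep.variance_sum hTmem]
    simp only [hTvar, sum_edgeTerms _ _ _ q hv]
    ring
  rw [cor_eq_cov_div_of_variance_eq (hLvar _ _ _ h13) (hLvar _ _ _ h23), cov_eq_covariance,
    hLsum _ _ _ h13, hLsum _ _ _ h23, hIndep.covariance_sum_sum hTmem,
    edgeTerms_inter_of_shared_node q h12 v3 hq, Finset.sum_singleton]
  exact congrArg (· / _) (hGvar v3)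

/-- Proposition 1, edges sharing one node, SNPs in different SNP-sets. -/
theorem nrss_cor_shared_node_diff_set
    {Ω Q V P : Type*} [MeasurableSpace Ω]
    (μ : Measure Ω) [IsProbabilityMeasure μ]
    (q : P → Q)
    (F : Q → Ω → ℝ) (G : V → Ω → ℝ) (H : V × P → Ω → ℝ)
    (σf2 σg2 σh2 : ℝ)
    (hIndep : iIndepFun (m := fun _ : Q ⊕ (V ⊕ V × P) => (inferInstance : MeasurableSpace ℝ))
      (Sum.elim F (Sum.elim G H)) μ)
    (hFmem : ∀ i, MemLp (F i) 2 μ)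
    (hGmem : ∀ i, MemLp (G i) 2 μ)
    (hHmem : ∀ i, MemLp (H i) 2 μ)
    (hFvar : ∀ i, variance (F i) μ = σf2)
    (hGvar : ∀ i, variance (G i) μ = σg2)
    (hHvar : ∀ i, variance (H i) μ = σh2)
    (L : V → V → P → Ω → ℝ)
    (hL : ∀ v v' p ω, L v v' p ω = F (q p) ω + G v ω + G v' ω + H (v, p) ω + H (v', p) ω)
    (v1 v2 v3 : V) (h12 : v1 ≠ v2) (h13 : v1 ≠ v3) (h23 : v2 ≠ v3)
    (p p' : P) (hp : p ≠ p') (hq : q p ≠ q p')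
    (hpos : 0 < σf2 + 2 * σg2 + 2 * σh2) :
    cor μ (L v1 v3 p) (L v2 v3 p') = σg2 / (σf2 + 2 * σg2 + 2 * σh2) :=
  nrss_cor_shared_node_diff_set_general μ q F G H σf2 σg2 σh2 hIndep hFmem hGmem hHmem hFvar hGvar
    hHvar L hL v1 v2 v3 h12 h13 h23 p p' hq
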